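/- (Jacobian of the matrix power function) Let n ≥ 1 and let F : ℍ^{N×N} → ℍ^{N×N} be F(Q) = Qⁿ. Then for every Q ∈ ℍ^{N×N} the GHR Jacobians satisfy D_Q(Qⁿ) = Σ_{m=1}^{n} (I_N ⊗ Q)^{n−m} · (Re(Q^{m−1})ᵀ ⊗ I_N) and D_{Q*}(Qⁿ) = −½ Σ_{m=1}^{n} (I_N ⊗ Q)^{n−m} · ((Q^{m−1})^H ⊗ I_N), where Re applies entrywise, ᵀ is the transpose, ^H the conjugate transpose, and ⊗ the Kronecker product of quaternion matrices (indexed by pairs, consistent with column-stacking vec ordering). -/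

import Mathlib

open scoped Quaternion
open Matrix

noncomputable section

/-- The imaginary unit `i` of the quaternions. -/
def qI : ℍ[ℝ] := ⟨0, 1, 0, 0⟩
/-- The imaginary unit `j` of the quaternions. -/
def qJ : ℍ[ℝ] := ⟨0, 0, 1, 0⟩
/-- The imaginary unit `k` of the quaternions. -/
def qK : ℍ[ℝ] := ⟨0, 0, 0, 1⟩

/-- The `N × S` quaternion matrix with entry `d` at position `(n,s)` and `0` elsewhere. -/
def single {N S : ℕ} (n : Fin N) (s : Fin S) (d : ℍ[ℝ]) : Fin N → Fin S → ℍ[ℝ] :=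
  Pi.single n (Pi.single s d)

/-- Real directional (Fréchet) derivative of a scalar function of a matrix variable, in the
direction `d` at the single entry `(n,s)` (the other entries held fixed). -/
def pd {N S : ℕ} (f : (Fin N → Fin S → ℍ[ℝ]) → ℍ[ℝ]) (Q : Fin N → Fin S → ℍ[ℝ])
    (n : Fin N) (s : Fin S) (d : ℍ[ℝ]) : ℍ[ℝ] :=
  fderiv ℝ f Q (_root_.single n s d)

/-- Left GHR derivative `∂f/∂q_{ns}` of a scalar function `f` with respect to the entry
`q_{ns}` of its matrix argument. -/
def ghrE {N S : ℕ} (f : (Fin N → Fin S → ℍ[ℝ]) → ℍ[ℝ])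
    (Q : Fin N → Fin S → ℍ[ℝ]) (n : Fin N) (s : Fin S) : ℍ[ℝ] :=
  (1 / 4 : ℝ) • (pd f Q n s 1 - pd f Q n s qI * qI - pd f Q n s qJ * qJ - pd f Q n s qK * qK)

/-- Conjugate left GHR derivative `∂f/∂q_{ns}*`. -/
def ghrEStar {N S : ℕ} (f : (Fin N → Fin S → ℍ[ℝ]) → ℍ[ℝ])
    (Q : Fin N → Fin S → ℍ[ℝ]) (n : Fin N) (s : Fin S) : ℍ[ℝ] :=
  (1 / 4 : ℝ) • (pd f Q n s 1 + pd f Q n s qI * qI + pd f Q n s qJ * qJ + pd f Q n s qK * qK)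

/-- The GHR Jacobian `D_Q F(Q)` (column-stacking `vec` ordering). -/
def ghrJac {N S M P : ℕ} (F : (Fin N → Fin S → ℍ[ℝ]) → (Fin M → Fin P → ℍ[ℝ]))
    (Q : Fin N → Fin S → ℍ[ℝ]) : Matrix (Fin M × Fin P) (Fin N × Fin S) ℍ[ℝ] :=
  Matrix.of fun mp ns => ghrE (fun X => F X mp.1 mp.2) Q ns.1 ns.2

/-- The conjugate GHR Jacobian `D_{Q*} F(Q)`. -/
def ghrJacStar {N S M P : ℕ} (F : (Fin N → Fin S → ℍ[ℝ]) → (Fin M → Fin P → ℍ[ℝ]))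
    (Q : Fin N → Fin S → ℍ[ℝ]) : Matrix (Fin M × Fin P) (Fin N × Fin S) ℍ[ℝ] :=
  Matrix.of fun mp ns => ghrEStar (fun X => F X mp.1 mp.2) Q ns.1 ns.2

/-- The Kronecker product (column-stacking `vec` convention):
`(A ⊗ B)_{(m,p),(r,s)} = A_{p s} B_{m r}`. -/
def kron {N : ℕ} (A B : Matrix (Fin N) (Fin N) ℍ[ℝ]) :
    Matrix (Fin N × Fin N) (Fin N × Fin N) ℍ[ℝ] :=
  Matrix.of fun mp rs => A mp.2 rs.2 * B mp.1 rs.1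

/-- The entrywise real part of a quaternion matrix (as a quaternion matrix). -/
def reMat {N : ℕ} (M : Matrix (Fin N) (Fin N) ℍ[ℝ]) : Matrix (Fin N) (Fin N) ℍ[ℝ] :=
  Matrix.of fun a b => ((M a b).re : ℍ[ℝ])

/-! Moving the single entry `q_{rs}` of `Q` in the direction `d` changes `(Qⁿ)_{ab}` to first
order by `Σ_k (Q^{n-1-k})_{ar} d (Q^k)_{sb}`. So only the sandwich maps `d ↦ p d q` need GHR
derivatives, and these come from `q - iqi - jqj - kqk = 4 Re q` and `q + iqi + jqj + kqk = -2 q*`.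
On the other side `I ⊗ Q` is block diagonal, so the `((a,b),(r,s))` entry of `(I ⊗ Q)^{n-m} (C ⊗ I)`
is `(Q^{n-m})_{ar} C_{bs}`, and the two sums agree term by term. -/

theorem self_sub_sandwiches_eq_four_re (q : ℍ[ℝ]) :
    q - qI * q * qI - qJ * q * qJ - qK * q * qK = ((4 * q.re : ℝ) : ℍ[ℝ]) := by
  ext <;> simp [Quaternion.re_mul, Quaternion.imI_mul, Quaternion.imJ_mul, Quaternion.imK_mul]
    <;> simp [qI, qJ, qK]; ring

theorem self_add_sandwiches_eq_neg_two_star (q : ℍ[ℝ]) :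
    q + qI * q * qI + qJ * q * qJ + qK * q * qK = (-2 : ℝ) • star q := by
  ext <;> simp [Quaternion.re_mul, Quaternion.imI_mul, Quaternion.imJ_mul, Quaternion.imK_mul]
    <;> simp [qI, qJ, qK] <;> ring

section GHRSandwich
variable {N S : ℕ} {f : (Fin N → Fin S → ℍ[ℝ]) → ℍ[ℝ]} {Q : Fin N → Fin S → ℍ[ℝ]}
  {r : Fin N} {s : Fin S} {ι : Type*} (t : Finset ι) (p q : ι → ℍ[ℝ])

theorem ghrE_eq_sum_of_pd_eq (hf : ∀ d, pd f Q r s d = ∑ k ∈ t, p k * d * q k) :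
    ghrE f Q r s = ∑ k ∈ t, p k * ((q k).re : ℍ[ℝ]) := by
  simp only [ghrE, hf, Finset.sum_mul, ← Finset.sum_sub_distrib, Finset.smul_sum]
  refine Finset.sum_congr rfl fun k _ => ?_
  calc (1 / 4 : ℝ) • (p k * 1 * q k - p k * qI * q k * qI - p k * qJ * q k * qJ
          - p k * qK * q k * qK)
      = p k * ((1 / 4 : ℝ) • (q k - qI * q k * qI - qJ * q k * qJ - qK * q k * qK)) := by
        rw [mul_smul_comm]; noncomm_ring
    _ = p k * ((q k).re : ℍ[ℝ]) := by
        rw [self_sub_sandwiches_eq_four_re, ← Quaternion.coe_smul, smul_eq_mul, one_div,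
          inv_mul_cancel_left₀ four_ne_zero]

theorem ghrEStar_eq_sum_of_pd_eq (hf : ∀ d, pd f Q r s d = ∑ k ∈ t, p k * d * q k) :
    ghrEStar f Q r s = -(1 / 2 : ℍ[ℝ]) * ∑ k ∈ t, p k * star (q k) := by
  simp only [ghrEStar, hf, Finset.sum_mul, ← Finset.sum_add_distrib, Finset.smul_sum,
    Finset.mul_sum]
  refine Finset.sum_congr rfl fun k _ => ?_
  calc (1 / 4 : ℝ) • (p k * 1 * q k + p k * qI * q k * qI + p k * qJ * q k * qJ
          + p k * qK * q k * qK)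
      = p k * ((1 / 4 : ℝ) • (q k + qI * q k * qI + qJ * q k * qJ + qK * q k * qK)) := by
        rw [mul_smul_comm]; noncomm_ring
    _ = p k * ((-(1 / 2) : ℝ) • star (q k)) := by
        rw [self_add_sandwiches_eq_neg_two_star, smul_smul]; norm_num
    _ = -(1 / 2 : ℍ[ℝ]) * (p k * star (q k)) := by
        rw [mul_smul_comm, ← Quaternion.coe_mul_eq_smul]; push_cast; rfl

end GHRSandwich

theorem mul_of_single_mul_apply {N : ℕ} (P R : Matrix (Fin N) (Fin N) ℍ[ℝ]) (a b r s : Fin N)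
    (d : ℍ[ℝ]) : (P * Matrix.of (_root_.single r s d) * R) a b = P a r * d * R s b := by
  simp [Matrix.mul_apply, _root_.single, Pi.single_apply, ite_apply, ite_mul, mul_ite,
    Finset.sum_ite_eq', mul_assoc]

section MatrixPow

attribute [local instance] Matrix.linftyOpNormedRing Matrix.linftyOpNormedAlgebra

theorem pd_matrix_pow_apply {N : ℕ} (n : ℕ) (Q : Fin N → Fin N → ℍ[ℝ]) (a b r s : Fin N)
    (d : ℍ[ℝ]) :
    pd (fun X => ((Matrix.of X) ^ n) a b) Q r s d =
      ∑ k ∈ Finset.range n, ((Matrix.of Q) ^ (n - 1 - k)) a r * d * ((Matrix.of Q) ^ k) s b := by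
  let ofL : (Fin N → Fin N → ℍ[ℝ]) →L[ℝ] Matrix (Fin N) (Fin N) ℍ[ℝ] :=
    LinearMap.toContinuousLinearMap (Matrix.ofLinearEquiv ℝ).toLinearMap
  let entry : Matrix (Fin N) (Fin N) ℍ[ℝ] →L[ℝ] ℍ[ℝ] :=
    LinearMap.toContinuousLinearMap (Matrix.entryLinearMap ℝ ℍ[ℝ] a b)
  have hpow : HasFDerivAt (fun X => ((Matrix.of X) ^ n) a b) _ Q :=
    entry.hasFDerivAt.comp Q (ofL.hasFDerivAt.fun_pow' n)
  rw [pd, hpow.fderiv]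
  -- `erw`: the operator-norm ring structure on `Matrix` is only defeq, not reducibly equal,
  -- to the plain `Matrix` instances that `ofL` and `entry` are built with.
  erw [ContinuousLinearMap.comp_apply, _root_.sum_apply, map_sum]
  refine Finset.sum_congr rfl fun k _ => ?_
  erw [_root_.smul_apply, _root_.smul_apply]
  exact mul_of_single_mul_apply _ _ _ _ _ _ _

end MatrixPow

section Kronecker
variable {N : ℕ}

theorem kron_one_eq_blockDiagonal (A : Matrix (Fin N) (Fin N) ℍ[ℝ]) :
    kron 1 A = blockDiagonal fun _ => A := by
  refine Matrix.ext fun ⟨a, b⟩ ⟨r, s⟩ => ?_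
  by_cases h : b = s <;> simp [kron, blockDiagonal_apply, one_apply, h]

theorem kron_one_pow (A : Matrix (Fin N) (Fin N) ℍ[ℝ]) (k : ℕ) :
    kron 1 A ^ k = kron 1 (A ^ k) := by
  rw [kron_one_eq_blockDiagonal, ← blockDiagonal_pow, kron_one_eq_blockDiagonal]
  rfl

theorem kron_one_mul_kron_one_apply (P C : Matrix (Fin N) (Fin N) ℍ[ℝ]) (a b r s : Fin N) :
    (kron 1 P * kron C 1) (a, b) (r, s) = P a r * C b s := by
  simp [kron, mul_apply, Fintype.sum_prod_type, one_apply, ite_mul, mul_ite]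

theorem sum_Icc_kron_apply (n : ℕ) (P : Matrix (Fin N) (Fin N) ℍ[ℝ])
    (C : ℕ → Matrix (Fin N) (Fin N) ℍ[ℝ]) (a b r s : Fin N) :
    (∑ m ∈ Finset.Icc 1 n, kron 1 P ^ (n - m) * kron (C (m - 1)) 1) (a, b) (r, s) =
      ∑ k ∈ Finset.range n, (P ^ (n - 1 - k)) a r * C k b s := by
  rw [Matrix.sum_apply, ← Finset.Ico_add_one_right_eq_Icc, Finset.sum_Ico_eq_sum_range,
    Nat.add_sub_cancel]
  refine Finset.sum_congr rfl fun k _ => ?_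
  rw [kron_one_pow, kron_one_mul_kron_one_apply, Nat.add_sub_cancel_left, Nat.sub_add_eq]

end Kronecker

theorem ghr_jacobian_matrix_power_general {N : ℕ} (n : ℕ)
    (Q : Fin N → Fin N → ℍ[ℝ]) :
    ghrJac (fun X (a b : Fin N) => ((Matrix.of X) ^ n) a b) Q =
      ∑ m ∈ Finset.Icc 1 n,
        (kron 1 (Matrix.of Q)) ^ (n - m) * kron ((reMat ((Matrix.of Q) ^ (m - 1)))ᵀ) 1
    ∧ ghrJacStar (fun X (a b : Fin N) => ((Matrix.of X) ^ n) a b) Q =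
      -(1 / 2 : ℍ[ℝ]) • ∑ m ∈ Finset.Icc 1 n,
        (kron 1 (Matrix.of Q)) ^ (n - m) * kron (((Matrix.of Q) ^ (m - 1))ᴴ) 1 := by
  constructor <;> refine Matrix.ext fun ⟨a, b⟩ ⟨r, s⟩ => ?_
  · exact (ghrE_eq_sum_of_pd_eq _ _ _ (pd_matrix_pow_apply n Q a b r s)).trans
      (sum_Icc_kron_apply n _ (fun k => (reMat (Matrix.of Q ^ k))ᵀ) a b r s).symm
  · rw [Matrix.smul_apply, smul_eq_mul]
    exact (ghrEStar_eq_sum_of_pd_eq _ _ _ (pd_matrix_pow_apply n Q a b r s)).trans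
      (congrArg _ (sum_Icc_kron_apply n _ (fun k => (Matrix.of Q ^ k)ᴴ) a b r s).symm)

/-- **Jacobians of the matrix power function** `F(Q) = Qⁿ` (`n ≥ 1`):
`D_Q(Qⁿ) = Σ_{m=1}^{n} (I_N ⊗ Q)^{n−m} (Re(Q^{m−1})ᵀ ⊗ I_N)` and
`D_{Q*}(Qⁿ) = −½ Σ_{m=1}^{n} (I_N ⊗ Q)^{n−m} ((Q^{m−1})^H ⊗ I_N)`. -/
theorem ghr_jacobian_matrix_power {N : ℕ} (n : ℕ) (hn : 1 ≤ n)
    (Q : Fin N → Fin N → ℍ[ℝ]) :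
    ghrJac (fun X (a b : Fin N) => ((Matrix.of X) ^ n) a b) Q =
      ∑ m ∈ Finset.Icc 1 n,
        (kron 1 (Matrix.of Q)) ^ (n - m) * kron ((reMat ((Matrix.of Q) ^ (m - 1)))ᵀ) 1
    ∧ ghrJacStar (fun X (a b : Fin N) => ((Matrix.of X) ^ n) a b) Q =
      -(1 / 2 : ℍ[ℝ]) • ∑ m ∈ Finset.Icc 1 n,
        (kron 1 (Matrix.of Q)) ^ (n - m) * kron (((Matrix.of Q) ^ (m - 1))ᴴ) 1 :=
  ghr_jacobian_matrix_power_general n Q
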